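/- In an abelian Polish group, the collection of Haar meager sets forms a σ-ideal: it contains the empty set, is closed under taking subsets, and is closed under countable unions. -/

import Mathlib

/-!
Choose Borel hulls `Bₙ ⊇ Aₙ` with test maps `gₙ : Kₙ → X`. A test map can be made to take values
in any neighbourhood of `0`: restrict it to a regular closed neighbourhood of a point, where meagre
sets stay meagre, and translate. Choosing these neighbourhoods recursively, so that adding `gₙ(kₙ)`
moves the compact set of partial sums `g₀(k₀) + ⋯ + gₙ₋₁(kₙ₋₁)` by less than `2⁻ⁿ` in a complete
metric, the series `f(k) = ∑ₙ gₙ(kₙ)` converges uniformly on `∏ₙ Kₙ`. For fixed `n`, `f(k) - gₙ(kₙ)`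
does not depend on `kₙ`, so every slice of `f⁻¹(Bₙ + x)` along the `n`-th coordinate is the
preimage under `gₙ` of a translate of `Bₙ`, hence meagre; by Kuratowski–Ulam `f⁻¹(Bₙ + x)` is
meagre, and so is the union over `n`.
-/

open Set

/-- `A` is *Haar meager* in an abelian (Polish) group `X` if there are a Borel set
`B ⊇ A`, a (nonempty) compact metric space `K` and a continuous `f : K → X` such that
`f ⁻¹ (B + x)` is meager in `K` for every `x ∈ X`.  Here `B + x = {y | y - x ∈ B}`. -/
def IsHaarMeager {X : Type*} [AddCommGroup X] [TopologicalSpace X]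
    [MeasurableSpace X] (A : Set X) : Prop :=
  ∃ B : Set X, A ⊆ B ∧ MeasurableSet B ∧
    ∃ (K : Type) (_ : MetricSpace K) (_ : CompactSpace K) (_ : Nonempty K)
      (f : K → X), Continuous f ∧ ∀ x : X, IsMeagre (f ⁻¹' {y | y - x ∈ B})

open Filter Topology TopologicalSpace

section KuratowskiUlam

variable {A Y : Type*} [TopologicalSpace A] [TopologicalSpace Y] [SecondCountableTopology A]

theorem eventually_residual_dense_preimage_prodMk {U : Set (A × Y)} (hU : IsOpen U)
    (hd : Dense U) : ∀ᶠ y in residual Y, Dense ((·, y) ⁻¹' U) := by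
  have hb := isBasis_countableBasis A
  have hcnt : {V ∈ countableBasis A | V.Nonempty}.Countable :=
    (countable_countableBasis A).mono (sep_subset _ _)
  have hmeets : ∀ V ∈ {V ∈ countableBasis A | V.Nonempty},
      ⋃ a ∈ V, Prod.mk a ⁻¹' U ∈ residual Y := by
    rintro V ⟨hV, hne⟩
    refine residual_of_dense_open
      (isOpen_biUnion fun a _ => hU.preimage (Continuous.prodMk_right a)) ?_
    refine dense_iff_inter_open.2 fun O hO hOne => ?_
    obtain ⟨⟨a, y⟩, ⟨haV, hyO⟩, haU⟩ :=
      hd.inter_open_nonempty _ ((hb.isOpen hV).prod hO) (hne.prod hOne)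
    exact ⟨y, hyO, mem_biUnion haV haU⟩
  filter_upwards [(countable_bInter_mem hcnt).2 hmeets] with y hy
  refine hb.dense_iff.2 fun V hV hne => ?_
  obtain ⟨a, haV, haU⟩ := mem_iUnion₂.1 (mem_iInter₂.1 hy V ⟨hV, hne⟩)
  exact ⟨a, haV, haU⟩

theorem eventually_residual_preimage_prodMk_mem_residual {s : Set (A × Y)}
    (hs : s ∈ residual (A × Y)) : ∀ᶠ y in residual Y, (·, y) ⁻¹' s ∈ residual A := by
  obtain ⟨S, hSo, hSd, hSc, hSs⟩ := mem_residual_iff.1 hs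
  filter_upwards [(eventually_countable_ball hSc).2 fun U hU =>
    eventually_residual_dense_preimage_prodMk (hSo U hU) (hSd U hU)] with y hy
  refine mem_of_superset ((countable_bInter_mem hSc).2 fun U hU =>
    residual_of_dense_open ((hSo U hU).preimage (Continuous.prodMk_left y)) (hy U hU)) ?_
  exact fun a ha => hSs (mem_sInter.2 fun U hU => mem_iInter₂.1 ha U hU)

theorem BaireMeasurableSet.isMeagre_of_forall_isMeagre_preimage_prodMk [BaireSpace A]
    [BaireSpace Y] {S : Set (A × Y)} (hS : BaireMeasurableSet S)
    (h : ∀ y, IsMeagre ((·, y) ⁻¹' S)) : IsMeagre S := by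
  obtain ⟨U, hUo, hSU⟩ := hS.residualEq_isOpen
  have hsec : ∀ᶠ y in residual Y, (·, y) ⁻¹' U = ∅ := by
    filter_upwards [eventually_residual_preimage_prodMk_mem_residual hSU] with y hy
    have hdiff : IsMeagre ((·, y) ⁻¹' {p | S p = U p})ᶜ := by rwa [IsMeagre, compl_compl]
    have hmeagre : IsMeagre ((·, y) ⁻¹' U) := by
      refine ((h y).union hdiff).mono fun a ha => or_iff_not_imp_left.2 fun haS heq => ?_
      exact haS ((Iff.of_eq heq).2 ha)
    by_contra hne
    exact not_isMeagre_of_isOpen (hUo.preimage (Continuous.prodMk_left y))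
      (nonempty_iff_ne_empty.2 hne) hmeagre
  have hU : U = ∅ := by
    refine eq_empty_of_forall_notMem fun p hp => ?_
    obtain ⟨y, ⟨q, hq, rfl⟩, hy⟩ := (dense_of_mem_residual hsec).inter_open_nonempty _
      (isOpenMap_snd U hUo) ⟨p.2, p, hp, rfl⟩
    exact (eq_empty_iff_forall_notMem.1 hy) q.1 hq
  exact eventuallyEq_empty.1 (hU ▸ hSU)

end KuratowskiUlam

theorem BaireMeasurableSet.isMeagre_of_forall_isMeagre_preimage_update {ι : Type*}
    [DecidableEq ι] {K : ι → Type*} [∀ j, TopologicalSpace (K j)] {i : ι}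
    [SecondCountableTopology (K i)] [BaireSpace (K i)] [BaireSpace (∀ j : {j // j ≠ i}, K j)]
    {E : Set (∀ j, K j)} (hE : BaireMeasurableSet E)
    (h : ∀ k, IsMeagre (Function.update k i ⁻¹' E)) : IsMeagre E := by
  let e := Homeomorph.piSplitAt i K
  have hsplit : IsMeagre (e.symm ⁻¹' E) := by
    refine (hE.preimage e.symm.continuous e.symm.isOpenMap)
      |>.isMeagre_of_forall_isMeagre_preimage_prodMk fun y => ?_
    rcases isEmpty_or_nonempty (K i) with hK | ⟨⟨a₀⟩⟩
    · simpa only [eq_empty_of_isEmpty] using IsMeagre.empty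
    · have hupd : (fun a => e.symm (a, y)) = Function.update (e.symm (a₀, y)) i := by
        ext a j
        by_cases hj : j = i
        · subst hj; simp [e]
        · simp [e, hj]
      change IsMeagre ((fun a => e.symm (a, y)) ⁻¹' E)
      exact hupd ▸ h _
  simpa only [e.preimage_symm, e.preimage_image] using
    hsplit.preimage_of_isOpenMap e.continuous e.isOpenMap

theorem tendsto_residual_subtypeVal_closure {K : Type*} [TopologicalSpace K] {V : Set K}
    (hV : IsOpen V) : Tendsto ((↑) : closure V → K) (residual (closure V)) (residual K) := by
  refine le_countableGenerate_iff_of_countableInterFilter.2 ?_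
  rintro W ⟨hWo, hWd⟩
  refine residual_of_dense_open (hWo.preimage continuous_subtype_val) (Subtype.dense_iff.2 ?_)
  rw [image_preimage_eq_inter_range, Subtype.range_coe]
  calc closure V ⊆ closure (V ∩ W) :=
        closure_minimal (hWd.open_subset_closure_inter hV) isClosed_closure
    _ ⊆ closure (W ∩ closure V) := closure_mono fun x hx => ⟨hx.2, subset_closure hx.1⟩

theorem exists_continuous_tendstoUniformly_of_dist_succ_le {Z α : Type*} [TopologicalSpace Z]
    [PseudoMetricSpace α] [CompleteSpace α] {F : ℕ → Z → α} {d : ℕ → ℝ}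
    (hF : ∀ n, Continuous (F n)) (hd : Summable d) (hFd : ∀ n z, dist (F n z) (F (n + 1) z) ≤ d n) :
    ∃ f, Continuous f ∧ TendstoUniformly F f atTop := by
  choose f hf using fun z =>
    cauchySeq_tendsto_of_complete (cauchySeq_of_dist_le_of_summable d (hFd · z) hd)
  have hunif : TendstoUniformly F f atTop := by
    refine Metric.tendstoUniformly_iff.2 fun ε hε => ?_
    filter_upwards [(tendsto_sum_nat_add d).eventually (gt_mem_nhds hε)] with n hn z
    rw [dist_comm]
    refine (dist_le_tsum_of_dist_le_of_tendsto d (hFd · z) hd (hf z) n).trans_lt ?_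
    simpa only [add_comm n] using hn
  exact ⟨f, hunif.continuous (Eventually.of_forall hF).frequently, hunif⟩

theorem IsCompact.eventually_forall_dist_add_lt {X : Type*} [AddZeroClass X]
    [PseudoMetricSpace X] [ContinuousAdd X] {P : Set X} (hP : IsCompact P) {ε : ℝ}
    (hε : 0 < ε) : ∀ᶠ t in 𝓝 (0 : X), ∀ p ∈ P, dist p (p + t) < ε :=
  hP.eventually_forall_of_forall_eventually fun p _ =>
    ((continuous_snd.dist (continuous_snd.add continuous_fst)).tendsto (0, p)).eventually
      (gt_mem_nhds (by simpa using hε))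

section

variable {X : Type*} [AddCommGroup X] [TopologicalSpace X]

structure HaarMeagerTest (B : Set X) where
  K : Type
  [metricSpace : MetricSpace K]
  [compactSpace : CompactSpace K]
  [nonempty : Nonempty K]
  toFun : K → X
  continuous : Continuous toFun
  isMeagre_preimage : ∀ x, IsMeagre (toFun ⁻¹' {y | y - x ∈ B})

attribute [instance] HaarMeagerTest.metricSpace HaarMeagerTest.compactSpace
  HaarMeagerTest.nonempty

namespace HaarMeagerTest

variable {B : Set X}

instance : CoeFun (HaarMeagerTest B) fun w => w.K → X := ⟨toFun⟩

def empty : HaarMeagerTest (∅ : Set X) where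
  K := Unit
  toFun _ := 0
  continuous := continuous_const
  isMeagre_preimage _ := by simpa using IsMeagre.empty

theorem exists_forall_apply_mem [IsTopologicalAddGroup X] (w : HaarMeagerTest B) {U : Set X}
    (hU : U ∈ 𝓝 0) : ∃ w' : HaarMeagerTest B, ∀ a, w' a ∈ U := by
  obtain ⟨a₀⟩ := w.nonempty
  have hnhds : (fun a => w a - w a₀) ⁻¹' U ∈ 𝓝 a₀ :=
    (w.continuous.sub continuous_const).continuousAt.preimage_mem_nhds (by simpa using hU)
  obtain ⟨t, ht, htc, htU⟩ := exists_mem_nhds_isClosed_subset hnhds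
  refine ⟨{ K := closure (interior t)
            compactSpace := isCompact_iff_compactSpace.1 isClosed_closure.isCompact
            nonempty := ⟨⟨a₀, subset_closure (mem_interior_iff_mem_nhds.2 ht)⟩⟩
            toFun := fun a => w a - w a₀
            continuous := (w.continuous.comp continuous_subtype_val).sub continuous_const
            isMeagre_preimage := fun x => ?_ },
    fun a => htU (closure_minimal interior_subset htc a.2)⟩
  have hpre : (fun a : closure (interior t) => w a - w a₀) ⁻¹' {y | y - x ∈ B} =
      (↑) ⁻¹' (w ⁻¹' {y | y - (x + w a₀) ∈ B}) := by
    ext a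
    simp only [mem_preimage, mem_ofPred_eq, sub_sub, add_comm x]
  rw [hpre]
  exact tendsto_residual_subtypeVal_closure isOpen_interior (w.isMeagre_preimage _)

end HaarMeagerTest

end

theorem isHaarMeager_iff_exists_haarMeagerTest {X : Type*} [AddCommGroup X]
    [TopologicalSpace X] [MeasurableSpace X] {A : Set X} :
    IsHaarMeager A ↔ ∃ B, A ⊆ B ∧ MeasurableSet B ∧ Nonempty (HaarMeagerTest B) := by
  constructor
  · rintro ⟨B, hAB, hB, K, _, _, _, f, hf, hmeagre⟩
    exact ⟨B, hAB, hB, ⟨⟨K, f, hf, hmeagre⟩⟩⟩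
  · rintro ⟨B, hAB, hB, ⟨w⟩⟩
    exact ⟨B, hAB, hB, w.K, w.metricSpace, w.compactSpace, w.nonempty, w, w.continuous,
      w.isMeagre_preimage⟩

theorem isHaarMeager_empty {X : Type*} [AddCommGroup X] [TopologicalSpace X]
    [MeasurableSpace X] : IsHaarMeager (∅ : Set X) :=
  isHaarMeager_iff_exists_haarMeagerTest.2 ⟨∅, subset_rfl, .empty, ⟨.empty⟩⟩

theorem IsHaarMeager.mono {X : Type*} [AddCommGroup X] [TopologicalSpace X]
    [MeasurableSpace X] {A B : Set X} (hAB : A ⊆ B) (hB : IsHaarMeager B) : IsHaarMeager A :=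
  let ⟨C, hBC, hC, htest⟩ := hB
  ⟨C, hAB.trans hBC, hC, htest⟩

open Finset Pointwise in
theorem exists_haarMeagerTest_dist_sum_range_succ_le {X : Type*} [AddCommGroup X]
    [PseudoMetricSpace X] [IsTopologicalAddGroup X] {B : ℕ → Set X}
    (hB : ∀ n, Nonempty (HaarMeagerTest (B n))) :
    ∃ w : ∀ n, HaarMeagerTest (B n), ∀ n (k : ∀ j, (w j).K),
      dist (∑ j ∈ range n, w j (k j)) (∑ j ∈ range (n + 1), w j (k j)) ≤ (1 / 2) ^ n := by
  have hstep : ∀ n (P : Compacts X), ∃ w : HaarMeagerTest (B n),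
      ∀ a, ∀ p ∈ P, dist p (p + w a) < (1 / 2) ^ n := fun n P =>
    (hB n).some.exists_forall_apply_mem (P.isCompact.eventually_forall_dist_add_lt (by positivity))
  choose w hw using hstep
  let P : ℕ → Compacts X := fun n => Nat.rec ⟨{0}, isCompact_singleton⟩
    (fun n P => ⟨(P : Set X) + Set.range (w n P),
      P.isCompact.add (isCompact_range (w n P).continuous)⟩) n
  refine ⟨fun n => w n (P n), fun n k => ?_⟩
  have hmem : ∀ n, ∑ j ∈ range n, w j (P j) (k j) ∈ P n := by
    intro n
    induction n with
    | zero => exact rfl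
    | succ n ih => rw [sum_range_succ]; exact Set.add_mem_add ih (Set.mem_range_self _)
  rw [sum_range_succ]
  exact (hw n (P n) (k n) _ (hmem n)).le

open Finset in
theorem apply_update_sub_eq_of_tendsto_sum_range {K : ℕ → Type*} {X : Type*} [AddCommGroup X]
    [TopologicalSpace X] [IsTopologicalAddGroup X] [T2Space X] {g : ∀ j, K j → X}
    {f : (∀ j, K j) → X} (hf : ∀ k, Tendsto (fun N => ∑ j ∈ range N, g j (k j)) atTop (𝓝 (f k)))
    (k : ∀ j, K j) (n : ℕ) (a : K n) : f (Function.update k n a) - g n a = f k - g n (k n) := by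
  refine tendsto_nhds_unique ((hf _).sub_const _) (((hf k).sub_const _).congr' ?_)
  filter_upwards [eventually_gt_atTop n] with N hN
  rw [← add_sum_erase _ _ (mem_range.2 hN), ← add_sum_erase _ _ (mem_range.2 hN),
    Function.update_self, add_sub_cancel_left, add_sub_cancel_left]
  exact sum_congr rfl fun j hj => by rw [Function.update_of_ne (ne_of_mem_erase hj)]

theorem isMeagre_preimage_of_apply_update_sub_eq {ι : Type*} [DecidableEq ι] {K : ι → Type*}
    [∀ j, TopologicalSpace (K j)] {i : ι} [SecondCountableTopology (K i)] [BaireSpace (K i)]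
    [BaireSpace (∀ j : {j // j ≠ i}, K j)] {X : Type*} [AddCommGroup X] [TopologicalSpace X]
    [IsTopologicalAddGroup X] [MeasurableSpace X] [BorelSpace X] {f : (∀ j, K j) → X}
    {g : K i → X} (hf : Continuous f) (hfg : ∀ k a, f (Function.update k i a) - g a = f k - g (k i))
    {B : Set X} (hB : MeasurableSet B) (hg : ∀ x, IsMeagre (g ⁻¹' {y | y - x ∈ B})) (x : X) :
    IsMeagre (f ⁻¹' {y | y - x ∈ B}) := by
  borelize (∀ j, K j)
  refine (hB.preimage (hf.sub continuous_const).measurable).baireMeasurableSet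
    |>.isMeagre_of_forall_isMeagre_preimage_update (i := i) fun k => ?_
  convert hg (x - (f k - g (k i))) using 2
  ext a
  show f (Function.update k i a) - x ∈ B ↔ g a - (x - (f k - g (k i))) ∈ B
  rw [← hfg k a]
  congr! 1
  abel

theorem IsHaarMeager.iUnion {X : Type*} [AddCommGroup X] [TopologicalSpace X]
    [IsTopologicalAddGroup X] [PolishSpace X] [MeasurableSpace X] [BorelSpace X]
    {A : ℕ → Set X} (hA : ∀ n, IsHaarMeager (A n)) : IsHaarMeager (⋃ n, A n) := by
  choose B hAB hB htest using fun n => isHaarMeager_iff_exists_haarMeagerTest.1 (hA n)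
  let := upgradeIsCompletelyMetrizable X
  obtain ⟨w, hw⟩ := exists_haarMeagerTest_dist_sum_range_succ_le htest
  obtain ⟨f, hf, hlim⟩ := exists_continuous_tendstoUniformly_of_dist_succ_le
    (fun N => continuous_finsetSum _ fun j _ => (w j).continuous.comp (continuous_apply j))
    summable_geometric_two hw
  let : MetricSpace (∀ j, (w j).K) := metrizableSpaceMetric _
  refine isHaarMeager_iff_exists_haarMeagerTest.2 ⟨⋃ n, B n, iUnion_mono hAB, .iUnion hB,
    ⟨⟨∀ j, (w j).K, f, hf, fun x => ?_⟩⟩⟩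
  simp only [mem_iUnion, ofPred_exists, preimage_iUnion]
  exact isMeagre_iUnion fun n => isMeagre_preimage_of_apply_update_sub_eq hf
    (apply_update_sub_eq_of_tendsto_sum_range (hlim.tendsto_at ·) · n) (hB n)
    (w n).isMeagre_preimage x

/-- In an abelian Polish group the Haar meager sets form a σ-ideal: the empty set is
Haar meager, subsets of Haar meager sets are Haar meager, and countable unions of
Haar meager sets are Haar meager. -/
theorem isHaarMeager_sigmaIdeal {X : Type*} [AddCommGroup X] [TopologicalSpace X]
    [IsTopologicalAddGroup X] [PolishSpace X] [MeasurableSpace X] [BorelSpace X] :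
    IsHaarMeager (∅ : Set X) ∧
    (∀ A B : Set X, A ⊆ B → IsHaarMeager B → IsHaarMeager A) ∧
    (∀ A : ℕ → Set X, (∀ n, IsHaarMeager (A n)) → IsHaarMeager (⋃ n, A n)) :=
  ⟨isHaarMeager_empty, fun _ _ hAB hB => hB.mono hAB, fun _ => IsHaarMeager.iUnion⟩
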